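/- Let n ≥ 1, p > 2, δ₁, …, δ_n ≥ 0 and ε ∈ (0, 1). Define F_ε : ℝⁿ → ℝ by F_ε(ξ) = ∑_{i=1}^n (1/p)(|ξ_i| − δ_i)₊^p + (ε/p)(1 + |ξ|²)^{p/2}. Then F_ε is twice continuously differentiable on ℝⁿ, and for every ξ, ζ ∈ ℝⁿ the second derivative bilinear form of F_ε at ξ evaluated at (ζ, ζ) equals (p−1)·∑_{i=1}^n (|ξ_i| − δ_i)₊^{p−2}·ζ_i² + ε·(1 + |ξ|²)^{(p−2)/2}·|ζ|² + ε·(p−2)·(1 + |ξ|²)^{(p−4)/2}·⟨ξ, ζ⟩². -/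

import Mathlib

/-!
For `d ≥ 0` at most one of `(s - d)₊` and `(-s - d)₊` is nonzero, so
`(|s| - d)₊^q = (s - d)₊^q + (-s - d)₊^q` for `q > 0`. This reduces every coordinate term of
`F_ε` to the one-variable function `t ↦ t₊^q`, which for `q > 1` is differentiable with derivative
`q t₊^(q-1)` (at `t = 0` because that derivative is continuous there). Applying this with `q = p`
and `q = p - 1 > 1` shows that `s ↦ (1/p)(|s| - d)₊^p` is `C²` with second derivative
`(p - 1)(|s| - d)₊^(p-2)`. The radial term `(ε/p)(1 + |ξ|²)^(p/2)` is smooth because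
`1 + |ξ|² > 0`, and its Hessian is obtained by differentiating its gradient
`ε (1 + |ξ|²)^((p-2)/2) ⟨ξ, ·⟩` once more.
-/

/-- The regularized orthotropic integrand
`F_ε(ξ) = ∑ᵢ (1/p)(|ξᵢ| − δᵢ)₊^p + (ε/p)(1 + |ξ|²)^{p/2}`. -/
noncomputable def Feps (n : ℕ) (p ε : ℝ) (δ : Fin n → ℝ)
    (ξ : EuclideanSpace ℝ (Fin n)) : ℝ :=
  (∑ i, (1 / p) * (max (|ξ i| - δ i) 0) ^ p) + ε / p * (1 + ‖ξ‖ ^ 2) ^ (p / 2)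

open Real Filter Topology

theorem hasDerivAt_max_zero_rpow {q : ℝ} (hq : 1 < q) (t : ℝ) :
    HasDerivAt (fun t : ℝ => max t 0 ^ q) (q * max t 0 ^ (q - 1)) t := by
  have off_zero : ∀ y ≠ (0 : ℝ),
      HasDerivAt (fun t : ℝ => max t 0 ^ q) (q * max y 0 ^ (q - 1)) y := by
    intro y hy
    rcases hy.lt_or_gt with hneg | hpos
    · have hzero : (fun t : ℝ => max t 0 ^ q) =ᶠ[𝓝 y] fun _ => (0 : ℝ) := by
        filter_upwards [eventually_lt_nhds hneg] with t ht
        rw [max_eq_right ht.le, zero_rpow (by linarith)]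
      rw [max_eq_right hneg.le, zero_rpow (by linarith), mul_zero]
      exact (hasDerivAt_const y (0 : ℝ)).congr_of_eventuallyEq hzero
    · have hid : (fun t : ℝ => max t 0 ^ q) =ᶠ[𝓝 y] fun t => t ^ q := by
        filter_upwards [eventually_gt_nhds hpos] with t ht
        rw [max_eq_left ht.le]
      rw [max_eq_left hpos.le]
      exact (hasDerivAt_rpow_const (Or.inl hpos.ne')).congr_of_eventuallyEq hid
  have hcont : ∀ r : ℝ, 0 ≤ r → Continuous (fun t : ℝ => max t 0 ^ r) := fun r hr =>
    (continuous_id.max continuous_const).rpow_const fun _ => Or.inr hr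
  rcases ne_or_eq t 0 with ht | rfl
  · exact off_zero t ht
  · exact hasDerivAt_of_hasDerivAt_of_ne off_zero (hcont q (by linarith)).continuousAt
      (continuous_const.mul (hcont (q - 1) (by linarith))).continuousAt

theorem max_abs_sub_zero_rpow {d q : ℝ} (hd : 0 ≤ d) (hq : 0 < q) (s : ℝ) :
    max (|s| - d) 0 ^ q = max (s - d) 0 ^ q + max (-s - d) 0 ^ q := by
  rcases le_total 0 s with hs | hs
  · rw [abs_of_nonneg hs, max_eq_right (by linarith : -s - d ≤ 0), zero_rpow hq.ne', add_zero]
  · rw [abs_of_nonpos hs, max_eq_right (by linarith : s - d ≤ 0), zero_rpow hq.ne', zero_add]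

theorem hasDerivAt_max_sub_zero_rpow_add_const_mul {q : ℝ} (hq : 1 < q) (d c s : ℝ) :
    HasDerivAt (fun s : ℝ => max (s - d) 0 ^ q + c * max (-s - d) 0 ^ q)
      (q * (max (s - d) 0 ^ (q - 1) - c * max (-s - d) 0 ^ (q - 1))) s := by
  have hright := (hasDerivAt_max_zero_rpow hq (s - d)).comp s ((hasDerivAt_id s).sub_const d)
  have hleft := (hasDerivAt_max_zero_rpow hq (-s - d)).comp s ((hasDerivAt_neg s).sub_const d)
  exact (hright.add (hleft.const_mul c)).congr_deriv (by ring)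

noncomputable def orthotropicTerm (p d s : ℝ) : ℝ := 1 / p * max (|s| - d) 0 ^ p

section OrthotropicTerm

variable {p d : ℝ}

theorem hasDerivAt_orthotropicTerm (hp : 1 < p) (hd : 0 ≤ d) (s : ℝ) :
    HasDerivAt (orthotropicTerm p d)
      (max (s - d) 0 ^ (p - 1) - max (-s - d) 0 ^ (p - 1)) s := by
  have hsplit : orthotropicTerm p d =
      fun s => 1 / p * (max (s - d) 0 ^ p + 1 * max (-s - d) 0 ^ p) := by
    ext s
    rw [orthotropicTerm, max_abs_sub_zero_rpow hd (by linarith), one_mul]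
  rw [hsplit]
  refine ((hasDerivAt_max_sub_zero_rpow_add_const_mul hp d 1 s).const_mul (1 / p)).congr_deriv ?_
  field_simp

theorem deriv_orthotropicTerm (hp : 1 < p) (hd : 0 ≤ d) :
    deriv (orthotropicTerm p d) =
      fun s => max (s - d) 0 ^ (p - 1) - max (-s - d) 0 ^ (p - 1) :=
  funext fun s => (hasDerivAt_orthotropicTerm hp hd s).deriv

theorem hasDerivAt_deriv_orthotropicTerm (hp : 2 < p) (hd : 0 ≤ d) (s : ℝ) :
    HasDerivAt (deriv (orthotropicTerm p d)) ((p - 1) * max (|s| - d) 0 ^ (p - 2)) s := by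
  rw [deriv_orthotropicTerm (by linarith) hd, max_abs_sub_zero_rpow hd (by linarith)]
  have h := hasDerivAt_max_sub_zero_rpow_add_const_mul (by linarith : 1 < p - 1) d (-1) s
  simp only [neg_one_mul, ← sub_eq_add_neg, show p - 1 - 1 = p - 2 by ring] at h
  exact h.congr_deriv (by ring)

theorem deriv_deriv_orthotropicTerm (hp : 2 < p) (hd : 0 ≤ d) :
    deriv (deriv (orthotropicTerm p d)) = fun s => (p - 1) * max (|s| - d) 0 ^ (p - 2) :=
  funext fun s => (hasDerivAt_deriv_orthotropicTerm hp hd s).deriv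

theorem contDiff_orthotropicTerm (hp : 2 < p) (hd : 0 ≤ d) :
    ContDiff ℝ 2 (orthotropicTerm p d) := by
  rw [show (2 : WithTop ℕ∞) = 1 + 1 from rfl, contDiff_succ_iff_deriv, contDiff_one_iff_deriv,
    deriv_deriv_orthotropicTerm hp hd]
  exact ⟨fun s => (hasDerivAt_orthotropicTerm (by linarith) hd s).differentiableAt, by simp,
    fun s => (hasDerivAt_deriv_orthotropicTerm hp hd s).differentiableAt,
    continuous_const.mul (((continuous_abs.sub continuous_const).max continuous_const).rpow_const
      fun _ => Or.inr (by linarith))⟩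

theorem iteratedDeriv_two_orthotropicTerm (hp : 2 < p) (hd : 0 ≤ d) (s : ℝ) :
    iteratedDeriv 2 (orthotropicTerm p d) s = (p - 1) * max (|s| - d) 0 ^ (p - 2) := by
  rw [iteratedDeriv_succ, iteratedDeriv_one, deriv_deriv_orthotropicTerm hp hd]

end OrthotropicTerm

theorem iteratedFDeriv_comp_functional_apply {𝕜 E F : Type*} [NontriviallyNormedField 𝕜]
    [NormedAddCommGroup E] [NormedSpace 𝕜 E] [NormedAddCommGroup F] [NormedSpace 𝕜 F]
    {f : 𝕜 → F} {k : ℕ} (hf : ContDiff 𝕜 k f) (ℓ : E →L[𝕜] 𝕜) (x : E) (m : Fin k → E) :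
    iteratedFDeriv 𝕜 k (f ∘ ℓ) x m = (∏ i, ℓ (m i)) • iteratedDeriv k f (ℓ x) := by
  rw [ℓ.iteratedFDeriv_comp_right hf x le_rfl,
    ContinuousMultilinearMap.compContinuousLinearMap_apply,
    iteratedFDeriv_apply_eq_iteratedDeriv_mul_prod]

theorem iteratedFDeriv_two_sum_coord_apply {ι : Type*} [Fintype ι] {f : ι → ℝ → ℝ}
    (hf : ∀ i, ContDiff ℝ 2 (f i)) (ξ ζ : EuclideanSpace ℝ ι) :
    iteratedFDeriv ℝ 2 (fun ξ : EuclideanSpace ℝ ι => ∑ i, f i (ξ i)) ξ ![ζ, ζ] =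
      ∑ i, iteratedDeriv 2 (f i) (ξ i) * ζ i ^ 2 := by
  have hsum : (fun ξ : EuclideanSpace ℝ ι => ∑ i, f i (ξ i)) =
      ∑ i, f i ∘ EuclideanSpace.proj i := by
    ext ξ
    simp
  have hcomp : ∀ i, ContDiff ℝ 2 (f i ∘ EuclideanSpace.proj i) :=
    fun i => (hf i).comp (EuclideanSpace.proj (𝕜 := ℝ) i).contDiff
  rw [hsum, iteratedFDeriv_sum_apply fun i _ => (hcomp i).contDiffAt, sum_apply]
  refine Finset.sum_congr rfl fun i _ => ?_
  rw [iteratedFDeriv_comp_functional_apply (hf i), Fin.prod_univ_two, smul_eq_mul]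
  simp only [Matrix.cons_val_zero, Matrix.cons_val_one, EuclideanSpace.coe_proj]
  ring

section OneAddNormSqRpow

variable {E : Type*} [NormedAddCommGroup E] [InnerProductSpace ℝ E]

theorem hasFDerivAt_one_add_norm_sq_rpow (a : ℝ) (x : E) :
    HasFDerivAt (fun x : E => (1 + ‖x‖ ^ 2) ^ a)
      ((2 * a * (1 + ‖x‖ ^ 2) ^ (a - 1)) • innerSL ℝ x) x := by
  have hN := (hasStrictFDerivAt_norm_sq x).hasFDerivAt.const_add 1
  have hr := hasDerivAt_rpow_const (p := a) (Or.inl (by positivity : 1 + ‖x‖ ^ 2 ≠ 0))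
  refine (hr.comp_hasFDerivAt x hN).congr_fderiv ?_
  ext v
  simp only [smul_apply, innerSL_apply_apply, nsmul_eq_mul, smul_eq_mul]
  ring_nf

theorem contDiff_one_add_norm_sq_rpow (a : ℝ) {k : WithTop ℕ∞} :
    ContDiff ℝ k (fun x : E => (1 + ‖x‖ ^ 2) ^ a) :=
  (contDiff_const.add (contDiff_norm_sq ℝ)).rpow_const_of_ne fun x => by positivity

theorem iteratedFDeriv_two_one_add_norm_sq_rpow_apply (a : ℝ) (x v : E) :
    iteratedFDeriv ℝ 2 (fun x : E => (1 + ‖x‖ ^ 2) ^ a) x ![v, v] =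
      2 * a * (1 + ‖x‖ ^ 2) ^ (a - 1) * ‖v‖ ^ 2
        + 4 * a * (a - 1) * (1 + ‖x‖ ^ 2) ^ (a - 2) * inner ℝ x v ^ 2 := by
  have hgrad : fderiv ℝ (fun x : E => (1 + ‖x‖ ^ 2) ^ a) =
      fun x => (2 * a * (1 + ‖x‖ ^ 2) ^ (a - 1)) • innerSL ℝ x :=
    funext fun x => (hasFDerivAt_one_add_norm_sq_rpow a x).fderiv
  -- `innerSL ℝ` is conjugate-linear; viewed as a linear map, `simp` no longer unfolds it
  have hinner : ∀ y w : E, (innerSL ℝ : E →L[ℝ] E →L[ℝ] ℝ) y w = inner ℝ y w := fun _ _ => rfl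
  have hhess := ((hasFDerivAt_one_add_norm_sq_rpow (a - 1) x).const_mul (2 * a)).fun_smul
    (innerSL ℝ : E →L[ℝ] E →L[ℝ] ℝ).hasFDerivAt
  rw [iteratedFDeriv_two_apply, hgrad, hhess.fderiv, show a - 1 - 1 = a - 2 by ring]
  simp only [Matrix.cons_val_zero, Matrix.cons_val_one, Matrix.cons_val_fin_one, add_apply,
    smul_apply, ContinuousLinearMap.smulRight_apply, hinner, real_inner_self_eq_norm_sq,
    smul_eq_mul]
  ring

end OneAddNormSqRpow

theorem stmt4_general (n : ℕ) (p : ℝ) (hp : 2 < p) (δ : Fin n → ℝ)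
    (hδ : ∀ i, 0 ≤ δ i) (ε : ℝ) :
    ContDiff ℝ 2 (Feps n p ε δ) ∧
      ∀ ξ ζ : EuclideanSpace ℝ (Fin n),
        iteratedFDeriv ℝ 2 (Feps n p ε δ) ξ ![ζ, ζ] =
          (p - 1) * ∑ i, (max (|ξ i| - δ i) 0) ^ (p - 2) * ζ i ^ 2
            + ε * (1 + ‖ξ‖ ^ 2) ^ ((p - 2) / 2) * ‖ζ‖ ^ 2
            + ε * (p - 2) * (1 + ‖ξ‖ ^ 2) ^ ((p - 4) / 2) * (inner ℝ ξ ζ : ℝ) ^ 2 := by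
  have hsplit : Feps n p ε δ =
      (fun ξ : EuclideanSpace ℝ (Fin n) => ∑ i, orthotropicTerm p (δ i) (ξ i))
        + fun ξ => (ε / p) • (1 + ‖ξ‖ ^ 2) ^ (p / 2) := rfl
  have hterm : ∀ i, ContDiff ℝ 2 (orthotropicTerm p (δ i)) :=
    fun i => contDiff_orthotropicTerm hp (hδ i)
  have hsep : ContDiff ℝ 2
      (fun ξ : EuclideanSpace ℝ (Fin n) => ∑ i, orthotropicTerm p (δ i) (ξ i)) :=
    ContDiff.sum fun i _ => (hterm i).comp (EuclideanSpace.proj (𝕜 := ℝ) i).contDiff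
  have hrad := contDiff_one_add_norm_sq_rpow (E := EuclideanSpace ℝ (Fin n)) (k := 2) (p / 2)
  refine ⟨hsplit ▸ hsep.add (hrad.const_smul _), fun ξ ζ => ?_⟩
  rw [hsplit, iteratedFDeriv_add_apply hsep.contDiffAt (hrad.const_smul _).contDiffAt,
    iteratedFDeriv_const_smul_apply' hrad.contDiffAt, add_apply, smul_apply,
    iteratedFDeriv_two_sum_coord_apply hterm, iteratedFDeriv_two_one_add_norm_sq_rpow_apply]
  simp only [iteratedDeriv_two_orthotropicTerm hp (hδ _), Finset.mul_sum, mul_assoc, smul_eq_mul]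
  rw [show p / 2 - 1 = (p - 2) / 2 by ring, show p / 2 - 2 = (p - 4) / 2 by ring]
  field_simp
  ring

/-- Let `n ≥ 1`, `p > 2`, `δ₁, …, δ_n ≥ 0` and `ε ∈ (0, 1)`. Then `F_ε` is twice
continuously differentiable on `ℝⁿ`, and for every `ξ, ζ ∈ ℝⁿ` the second derivative
bilinear form of `F_ε` at `ξ` evaluated at `(ζ, ζ)` equals
`(p−1)·∑ᵢ (|ξᵢ| − δᵢ)₊^{p−2}·ζᵢ² + ε·(1 + |ξ|²)^{(p−2)/2}·|ζ|²
  + ε·(p−2)·(1 + |ξ|²)^{(p−4)/2}·⟨ξ, ζ⟩²`. -/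
theorem stmt4 (n : ℕ) (hn : 1 ≤ n) (p : ℝ) (hp : 2 < p) (δ : Fin n → ℝ)
    (hδ : ∀ i, 0 ≤ δ i) (ε : ℝ) (hε : ε ∈ Set.Ioo (0:ℝ) 1) :
    ContDiff ℝ 2 (Feps n p ε δ) ∧
      ∀ ξ ζ : EuclideanSpace ℝ (Fin n),
        iteratedFDeriv ℝ 2 (Feps n p ε δ) ξ ![ζ, ζ] =
          (p - 1) * ∑ i, (max (|ξ i| - δ i) 0) ^ (p - 2) * ζ i ^ 2
            + ε * (1 + ‖ξ‖ ^ 2) ^ ((p - 2) / 2) * ‖ζ‖ ^ 2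
            + ε * (p - 2) * (1 + ‖ξ‖ ^ 2) ^ ((p - 4) / 2) * (inner ℝ ξ ζ : ℝ) ^ 2 :=
  stmt4_general n p hp δ hδ ε
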